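/- arXiv:1508.06016 — 3 statements merged into one kernel-verified Lean document; each statement's English description precedes it below -/
import Mathlib

section
/- Let d, b, e, f, c be rational numbers with b ≠ 0, b ≠ 10 and d ≠ 0. Define λ = e − c/b, δ = (12 − d)·e + f − (1/2 + 4/b)·c, and D = 4·f − (4d − 12)·e. Then −f + ((d−3)/d)·c = (((21 − d − 54/d)·b − 8d + 24)/(b−10))·λ − ((((2 − 6/d)·b − 2d + 6)/(b−10))·δ + (((1 − 6/d)·b − 2d + 16)/(4(b−10)))·D, i.e. −f + ((d−3)/d)·c = (((21 − d − 54/d)·b − 8d + 24)/(b−10))·λ − (((2 − 6/d)·b − 2d + 6)/(b−10))·δ + (((1 − 6/d)·b − 2d + 16)/(4(b−10)))·D. -/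
theorem stmt2 (d b e f c : ℚ) (hb : b ≠ 0) (hb10 : b ≠ 10) (hd : d ≠ 0)
    (lam δ D : ℚ)
    (hlam : lam = e - c / b)
    (hδ : δ = (12 - d) * e + f - (1/2 + 4/b) * c)
    (hD : D = 4 * f - (4*d - 12) * e) :
    -f + ((d - 3)/d) * c =
      (((21 - d - 54/d) * b - 8*d + 24)/(b - 10)) * lam
      - (((2 - 6/d) * b - 2*d + 6)/(b - 10)) * δ
      + (((1 - 6/d) * b - 2*d + 16)/(4*(b - 10))) * D := by
  have hb10' : b - 10 ≠ 0 := sub_ne_zero.mpr hb10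
  subst hlam hδ hD
  field_simp
  ring
end

section
/- Let g and h be integers with g ≥ 11 and h ≥ 0. Set (as rational numbers) a = (31g + 44)/10, b = g/2, and set k = ⌈5(h+4)/6⌉ and m = ⌈−3(h+4)/4⌉ (ceilings of rational numbers, taken in ℤ). Then b·(13h − 7k + 27) − a·(2h − k + 3) + ((2g − 22)/5)·(k + m) ≥ 3g − (11/2)·h. -/
/-! The coefficient of `k` vanishes identically, and the difference of the two sides is the
Maroni coefficient `(2g - 22)/5` times `m + 3(h + 4)/4`; both factors are nonnegative, the
second because `m` is a ceiling of `-3(h + 4)/4`. -/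

lemma slope_bound_sub_eq_maroni_mul (g h k m : ℚ) :
    g / 2 * (13 * h - 7 * k + 27) - (31 * g + 44) / 10 * (2 * h - k + 3)
        + (2 * g - 22) / 5 * (k + m) - (3 * g - 11 / 2 * h)
      = (2 * g - 22) / 5 * (m + 3 * (h + 4) / 4) := by
  ring

lemma add_nonneg_of_eq_ceil {h m : ℤ} (hm : m = ⌈(-3 * ((h : ℚ) + 4)) / 4⌉) :
    0 ≤ (m : ℚ) + 3 * ((h : ℚ) + 4) / 4 := by
  have := hm ▸ Int.le_ceil ((-3 * ((h : ℚ) + 4)) / 4)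
  linarith

theorem stmt6_general (g h : ℤ) (hg : 11 ≤ g)
    (a b : ℚ) (ha : a = (31*(g:ℚ) + 44)/10) (hb : b = (g:ℚ)/2)
    (k m : ℤ)
    (hm : m = ⌈(-3*((h:ℚ)+4))/4⌉) :
    b * (13*(h:ℚ) - 7*(k:ℚ) + 27) - a * (2*(h:ℚ) - (k:ℚ) + 3)
      + ((2*(g:ℚ) - 22)/5) * ((k:ℚ) + (m:ℚ))
      ≥ 3*(g:ℚ) - (11/2) * (h:ℚ) := by
  subst ha hb
  have maroni_nonneg : 0 ≤ (2 * (g : ℚ) - 22) / 5 := by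
    have : (11 : ℚ) ≤ g := by exact_mod_cast hg
    linarith
  rw [ge_iff_le, ← sub_nonneg, slope_bound_sub_eq_maroni_mul]
  exact mul_nonneg maroni_nonneg (add_nonneg_of_eq_ceil hm)

theorem stmt6 (g h : ℤ) (hg : 11 ≤ g) (hh : 0 ≤ h)
    (a b : ℚ) (ha : a = (31*(g:ℚ) + 44)/10) (hb : b = (g:ℚ)/2)
    (k m : ℤ)
    (hk : k = ⌈(5*((h:ℚ)+4))/6⌉)
    (hm : m = ⌈(-3*((h:ℚ)+4))/4⌉) :
    b * (13*(h:ℚ) - 7*(k:ℚ) + 27) - a * (2*(h:ℚ) - (k:ℚ) + 3)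
      + ((2*(g:ℚ) - 22)/5) * ((k:ℚ) + (m:ℚ))
      ≥ 3*(g:ℚ) - (11/2) * (h:ℚ) :=
  stmt6_general g h hg a b ha hb k m hm
end

section
/- Let g, i, k be integers with g ≥ 9, i ≥ 0, 0 ≤ k ≤ 2, and 6i + 2k ≤ g − 3. Set (as rational numbers) a = (13g + 15)/2 and b = g. Then 3·((13/2)·b − a)·(i·(i+1)/2) + (((13/2)·k + 7/2)·b − k·a)·i ≥ 0. -/
/-!
With `a = (13g + 15)/2` and `b = g` one has `13b/2 - a = -15/2`, and the whole expression
collapses to `i (14g - 30k - 45i - 45) / 4`. The range condition gives `14g ≥ 84i + 28k + 42`,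
so the second factor is at least `39i - 2k - 3 ≥ 32` as soon as `i ≥ 1`.
-/

lemma tetr_aggregate_eq (g i k : ℚ) :
    3 * ((13/2) * g - (13*g + 15)/2) * (i * (i + 1) / 2)
      + (((13/2) * k + 7/2) * g - k * ((13*g + 15)/2)) * i
      = i * (14*g - 30*k - 45*i - 45) / 4 := by
  ring

lemma tetr_aggregate_factor_nonneg {g i k : ℤ} (hi : 0 ≤ i) (hk : k ≤ 2)
    (hrange : 6*i + 2*k ≤ g - 3) :
    0 ≤ i * (14*g - 30*k - 45*i - 45) := by
  rcases hi.eq_or_lt with rfl | hpos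
  · simp
  · exact mul_nonneg hpos.le (by omega)

theorem stmt7_general (g i k : ℤ) (hi : 0 ≤ i) (hk2 : k ≤ 2)
    (hrange : 6*i + 2*k ≤ g - 3)
    (a b : ℚ) (ha : a = (13*(g:ℚ) + 15)/2) (hb : b = (g:ℚ)) :
    3 * ((13/2) * b - a) * ((i:ℚ) * ((i:ℚ) + 1) / 2)
      + (((13/2) * (k:ℚ) + 7/2) * b - (k:ℚ) * a) * (i:ℚ) ≥ 0 := by
  subst ha hb
  rw [ge_iff_le, tetr_aggregate_eq]
  have hfactor : (0 : ℚ) ≤ i * (14*g - 30*k - 45*i - 45) := by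
    exact_mod_cast tetr_aggregate_factor_nonneg hi hk2 hrange
  exact div_nonneg hfactor (by norm_num)

theorem stmt7 (g i k : ℤ) (hg : 9 ≤ g) (hi : 0 ≤ i) (hk0 : 0 ≤ k) (hk2 : k ≤ 2)
    (hrange : 6*i + 2*k ≤ g - 3)
    (a b : ℚ) (ha : a = (13*(g:ℚ) + 15)/2) (hb : b = (g:ℚ)) :
    3 * ((13/2) * b - a) * ((i:ℚ) * ((i:ℚ) + 1) / 2)
      + (((13/2) * (k:ℚ) + 7/2) * b - (k:ℚ) * a) * (i:ℚ) ≥ 0 :=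
  stmt7_general g i k hi hk2 hrange a b ha hb
end
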